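/- arXiv:math/0308025 — 3 statements merged into one kernel-verified Lean document; each statement's English description precedes it below -/
import Mathlib

section
/- Let (Ω_k, A_k) be measurable spaces carrying probability measures μ_k and ν_k with ν_k absolutely continuous with respect to μ_k for every k, and let μ = ⊗_k μ_k, ν = ⊗_k ν_k be the infinite product measures. Then ν is absolutely continuous with respect to μ if and only if the infinite product Π_{k=1}^∞ ρ(μ_k, ν_k) is strictly positive, where ρ(μ_k, ν_k) = ∫_{Ω_k} √(dν_k/dμ_k) dμ_k is the Hellinger integral. -/
/-!
Write `φ k = √(dν k/dμ k)`, `ρ k = ∫ φ k dμ k` and `U_s ω = ∏_{k ∈ s} φ k (ω k)` for a finite set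
`s`, with `U_n = U_{range n}`. Then `U_s²` is the density, with respect to `P = ⊗ μ k`, of the
product measure that uses `ν k` on the coordinates in `s` and `μ k` elsewhere, and
`∫ U_t U_s dP = ∏_{k ∈ t \ s} ρ k` for `s ⊆ t`.

If `∏_{k<n} ρ k → 0`, the sets `{U_n ≥ 1}` have `P`-measure at most `∏_{k<n} ρ k` by Markov's
inequality, while their complements have `Q`-measure at most `∏_{k<n} ρ k` as well, so `Q ≪ P`
fails. If `∏_{k<n} ρ k ≥ c > 0`, then `∏_{n ≤ k < m} ρ k` is close to `1` for large `n`, uniformly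
in `m`, and by Cauchy–Schwarz the total variation `∫ (U_m² - U_n²)⁺ dP` is at most
`√(8 (1 - ∏_{n ≤ k < m} ρ k))`. Hence on cylinder sets, and by approximation on all measurable
sets, `Q` exceeds the measure `U_n² P ≪ P` by an arbitrarily small amount.
-/

open MeasureTheory

/-- `P` is the infinite product of the probability measures `μ k`: every
finite-dimensional cylinder set gets the product of the coordinate measures. -/
def IsProductMeasure {Ω : ℕ → Type*} [∀ k, MeasurableSpace (Ω k)]
    (μ : (k : ℕ) → Measure (Ω k)) (P : Measure ((k : ℕ) → Ω k)) : Prop :=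
  ∀ (s : Finset ℕ) (E : (k : ℕ) → Set (Ω k)), (∀ k ∈ s, MeasurableSet (E k)) →
    P {ω | ∀ k ∈ s, ω k ∈ E k} = ∏ k ∈ s, μ k (E k)

open Measure ProbabilityTheory Finset Filter Topology
open scoped ENNReal symmDiff

namespace ENNReal

theorem sq_tsub_sq_le (a b : ℝ≥0∞) : a ^ 2 - b ^ 2 ≤ (a - b) * (a + b) := by
  rcases le_or_gt a b with hab | hba
  · simp [tsub_eq_zero_of_le (pow_le_pow_left₀ zero_le hab 2)]
  obtain ⟨d, rfl⟩ := exists_add_of_le hba.le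
  have hb : b ≠ ∞ := hba.ne_top
  rw [ENNReal.add_sub_cancel_left hb, show (b + d) ^ 2 = d * (b + d + b) + b ^ 2 by ring,
    ENNReal.add_sub_cancel_right (pow_ne_top hb)]

theorem tsub_sq_add_two_mul_le (a b : ℝ≥0∞) : (a - b) ^ 2 + 2 * a * b ≤ a ^ 2 + b ^ 2 := by
  rcases le_or_gt a b with hab | hba
  · obtain ⟨d, rfl⟩ := exists_add_of_le hab
    calc (a - (a + d)) ^ 2 + 2 * a * (a + d) = 2 * a ^ 2 + 2 * a * d := by
          rw [tsub_eq_zero_of_le hab]; ring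
      _ ≤ 2 * a ^ 2 + 2 * a * d + d ^ 2 := le_self_add
      _ = a ^ 2 + (a + d) ^ 2 := by ring
  · obtain ⟨d, rfl⟩ := exists_add_of_le hba.le
    rw [ENNReal.add_sub_cancel_left hba.ne_top]
    exact le_of_eq (by ring)

theorem add_sq_le (a b : ℝ≥0∞) : (a + b) ^ 2 ≤ 2 * (a ^ 2 + b ^ 2) :=
  calc (a + b) ^ 2 = a ^ 2 + b ^ 2 + 2 * a * b := by ring
    _ ≤ a ^ 2 + b ^ 2 + ((a - b) ^ 2 + 2 * a * b) := add_le_add_right le_add_self _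
    _ ≤ 2 * (a ^ 2 + b ^ 2) := by
        rw [two_mul (a ^ 2 + b ^ 2)]
        exact add_le_add_right (tsub_sq_add_two_mul_le a b) _

theorem antitone_prod_range {ρ : ℕ → ℝ≥0∞} (hρ : ∀ k, ρ k ≤ 1) :
    Antitone fun n => ∏ k ∈ range n, ρ k :=
  antitone_nat_of_succ_le fun n => by rw [prod_range_succ]; exact mul_le_of_le_one_right' (hρ n)

theorem exists_one_tsub_prod_range_sdiff_le {ρ : ℕ → ℝ≥0∞} (hρ : ∀ k, ρ k ≤ 1)
    (hpos : 0 < ⨅ n, ∏ k ∈ range n, ρ k) {η : ℝ≥0∞} (hη : 0 < η) :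
    ∃ n, ∀ m ≥ n, 1 - ∏ k ∈ range m \ range n, ρ k ≤ η := by
  set p : ℕ → ℝ≥0∞ := fun n => ∏ k ∈ range n, ρ k
  set c := ⨅ n, p n
  have hp1 (n : ℕ) : p n ≤ 1 := prod_le_one' fun k _ => hρ k
  have hc : c ≠ ∞ := ne_top_of_le_ne_top one_ne_top ((iInf_le p 0).trans (hp1 0))
  have hlim : Tendsto (fun n => p n * (1 - η)) atTop (𝓝 (c * (1 - η))) :=
    ENNReal.Tendsto.mul_const (tendsto_atTop_iInf (antitone_prod_range hρ))
      (Or.inr (ne_top_of_le_ne_top one_ne_top tsub_le_self))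
  have hlt : c * (1 - η) < c := by
    simpa using (ENNReal.mul_lt_mul_iff_right hpos.ne' hc).2
      (ENNReal.sub_lt_self one_ne_top one_ne_zero hη.ne')
  obtain ⟨n, hn⟩ := (hlim.eventually (gt_mem_nhds hlt)).exists
  refine ⟨n, fun m hm => tsub_le_iff_tsub_le.1 ?_⟩
  have hpn : p n ≠ 0 := (hpos.trans_le (iInf_le p n)).ne'
  refine (ENNReal.mul_le_mul_iff_right hpn (ne_top_of_le_ne_top one_ne_top (hp1 n))).1 ?_
  calc p n * (1 - η) ≤ c := hn.le
    _ ≤ p m := iInf_le p m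
    _ = p n * ∏ k ∈ range m \ range n, ρ k := by
        rw [mul_comm]; exact (prod_sdiff (range_subset_range.2 hm)).symm

end ENNReal

section Lebesgue

variable {α : Type*} [MeasurableSpace α] {μ ν : Measure α}

theorem sq_lintegral_mul_le {f g : α → ℝ≥0∞} (hf : AEMeasurable f μ) (hg : AEMeasurable g μ) :
    (∫⁻ x, f x * g x ∂μ) ^ 2 ≤ (∫⁻ x, f x ^ 2 ∂μ) * ∫⁻ x, g x ^ 2 ∂μ := by
  have h := ENNReal.lintegral_mul_le_Lp_mul_Lq μ Real.HolderConjugate.two_two hf hg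
  simp only [Pi.mul_apply, ENNReal.rpow_two] at h
  have hsq (t : ℝ≥0∞) : (t ^ (1 / 2 : ℝ)) ^ 2 = t := by
    rw [← ENNReal.rpow_mul_natCast]; norm_num
  calc (∫⁻ x, f x * g x ∂μ) ^ 2
      ≤ ((∫⁻ x, f x ^ 2 ∂μ) ^ (1 / 2 : ℝ) * (∫⁻ x, g x ^ 2 ∂μ) ^ (1 / 2 : ℝ)) ^ 2 := by gcongr
    _ = _ := by rw [mul_pow, hsq, hsq]

theorem sq_lintegral_sq_tsub_sq_le {u v : α → ℝ≥0∞} (hu : Measurable u) (hv : Measurable v)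
    (hu2 : ∫⁻ x, u x ^ 2 ∂μ = 1) (hv2 : ∫⁻ x, v x ^ 2 ∂μ = 1) :
    (∫⁻ x, u x ^ 2 - v x ^ 2 ∂μ) ^ 2 ≤ 8 * (1 - ∫⁻ x, u x * v x ∂μ) := by
  set H := ∫⁻ x, u x * v x ∂μ
  have hminus : ∫⁻ x, (u x - v x) ^ 2 ∂μ + 2 * H ≤ 2 :=
    calc ∫⁻ x, (u x - v x) ^ 2 ∂μ + 2 * H = ∫⁻ x, (u x - v x) ^ 2 + 2 * u x * v x ∂μ := by
          rw [lintegral_add_right _ (by fun_prop), ← lintegral_const_mul _ (by fun_prop)]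
          simp_rw [mul_assoc]
      _ ≤ ∫⁻ x, u x ^ 2 + v x ^ 2 ∂μ :=
          lintegral_mono fun x => ENNReal.tsub_sq_add_two_mul_le _ _
      _ = 2 := by rw [lintegral_add_left (hu.pow_const 2), hu2, hv2, one_add_one_eq_two]
  have hH : 2 * H ≠ ∞ := ne_top_of_le_ne_top ENNReal.ofNat_ne_top (le_add_self.trans hminus)
  have hplus : ∫⁻ x, (u x + v x) ^ 2 ∂μ ≤ 4 :=
    calc ∫⁻ x, (u x + v x) ^ 2 ∂μ ≤ ∫⁻ x, 2 * (u x ^ 2 + v x ^ 2) ∂μ :=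
          lintegral_mono fun x => ENNReal.add_sq_le _ _
      _ = 4 := by
          rw [lintegral_const_mul _ (by fun_prop), lintegral_add_left (hu.pow_const 2), hu2, hv2]
          norm_num
  calc (∫⁻ x, u x ^ 2 - v x ^ 2 ∂μ) ^ 2 ≤ (∫⁻ x, (u x - v x) * (u x + v x) ∂μ) ^ 2 := by
        gcongr with x; exact ENNReal.sq_tsub_sq_le _ _
    _ ≤ (∫⁻ x, (u x - v x) ^ 2 ∂μ) * ∫⁻ x, (u x + v x) ^ 2 ∂μ :=
        sq_lintegral_mul_le (hu.sub hv).aemeasurable (hu.add hv).aemeasurable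
    _ ≤ (2 - 2 * H) * 4 := by
        gcongr
        exact ENNReal.le_sub_of_add_le_right hH hminus
    _ = 8 * (1 - H) := by
        rw [mul_comm, ENNReal.mul_sub (fun _ _ => by norm_num),
          ENNReal.mul_sub (fun _ _ => by norm_num), ← mul_assoc]
        norm_num

theorem lintegral_eq_one_of_withDensity_eq [IsProbabilityMeasure ν] {f : α → ℝ≥0∞}
    (h : μ.withDensity f = ν) : ∫⁻ x, f x ∂μ = 1 := by
  rw [← setLIntegral_univ, ← withDensity_apply _ .univ, h, measure_univ]

theorem lintegral_le_one_of_withDensity_sq_eq [IsProbabilityMeasure μ] [IsProbabilityMeasure ν]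
    {φ : α → ℝ≥0∞} (hφ : AEMeasurable φ μ) (h : μ.withDensity (fun x => φ x ^ 2) = ν) :
    ∫⁻ x, φ x ∂μ ≤ 1 := by
  have hsq := sq_lintegral_mul_le hφ aemeasurable_const (g := 1)
  simp only [Pi.one_apply, mul_one, one_pow, lintegral_const, measure_univ,
    lintegral_eq_one_of_withDensity_eq h] at hsq
  exact (ENNReal.pow_le_pow_left_iff two_ne_zero).1 (by simpa using hsq)

theorem withDensity_sq_sqrt_rnDeriv [SigmaFinite μ] [SigmaFinite ν] (hνμ : ν ≪ μ) :
    μ.withDensity (fun x => ENNReal.ofReal √(ν.rnDeriv μ x).toReal ^ 2) = ν :=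
  calc _ = μ.withDensity (ν.rnDeriv μ) := withDensity_congr_ae <| by
        filter_upwards [Measure.rnDeriv_lt_top ν μ] with x hx
        rw [← ENNReal.ofReal_pow (Real.sqrt_nonneg _), Real.sq_sqrt ENNReal.toReal_nonneg,
          ENNReal.ofReal_toReal hx.ne]
    _ = ν := Measure.withDensity_rnDeriv_eq ν μ hνμ

theorem withDensity_apply_le_add_lintegral_tsub [SFinite μ] {f g : α → ℝ≥0∞}
    (hg : Measurable g) (s : Set α) :
    μ.withDensity f s ≤ μ.withDensity g s + ∫⁻ x, f x - g x ∂μ := by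
  rw [withDensity_apply', withDensity_apply']
  calc ∫⁻ x in s, f x ∂μ ≤ ∫⁻ x in s, g x + (f x - g x) ∂μ := lintegral_mono fun x => le_add_tsub
    _ = ∫⁻ x in s, g x ∂μ + ∫⁻ x in s, f x - g x ∂μ := lintegral_add_left hg _
    _ ≤ _ := by gcongr; exact Measure.restrict_le_self

theorem MeasureTheory.Measure.AbsolutelyContinuous.tendsto_measure_nhds_zero [SigmaFinite μ]
    [IsFiniteMeasure ν] (hνμ : ν ≪ μ) {ι : Type*} {l : Filter ι} {s : ι → Set α}
    (hs : Tendsto (fun i => μ (s i)) l (𝓝 0)) : Tendsto (fun i => ν (s i)) l (𝓝 0) := by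
  have h := tendsto_setLIntegral_zero
    (ne_top_of_le_ne_top (measure_ne_top ν Set.univ) Measure.lintegral_rnDeriv_le) hs
  simpa only [← withDensity_apply', Measure.withDensity_rnDeriv_eq ν μ hνμ] using h

theorem measure_le_add_of_isSetRing [IsFiniteMeasure μ] [IsFiniteMeasure ν]
    {C : Set (Set α)} (hC : IsSetRing C) (hCuniv : Set.univ ∈ C)
    (hgen : ‹MeasurableSpace α› = MeasurableSpace.generateFrom C) {δ : ℝ≥0∞}
    (hδ : ∀ t ∈ C, μ t ≤ ν t + δ) {s : Set α} (hs : MeasurableSet s) : μ s ≤ ν s + δ := by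
  refine ENNReal.le_of_forall_pos_le_add fun ε hε _ => ?_
  obtain ⟨t, htC, hts⟩ := exists_measure_symmDiff_lt_of_generateFrom_isSetRing (μ := μ + ν) hC
    ⟨{Set.univ}, Set.countable_singleton _, by simpa using hCuniv, by simp⟩ hgen hs
    (ENNReal.coe_pos.2 hε)
  rw [Measure.add_apply] at hts
  have hμ : μ s ≤ μ t + μ (t ∆ s) := tsub_le_iff_left.1 (symmDiff_comm s t ▸ le_measure_symmDiff)
  have hν : ν t ≤ ν s + ν (t ∆ s) := tsub_le_iff_left.1 le_measure_symmDiff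
  calc μ s ≤ ν s + ν (t ∆ s) + δ + μ (t ∆ s) := by grw [hμ, hδ t htC, hν]
    _ = ν s + δ + (μ (t ∆ s) + ν (t ∆ s)) := by ring
    _ ≤ ν s + δ + ε := by grw [hts]

end Lebesgue

section InfinitePi

variable {ι : Type*} {X : ι → Type*} [∀ i, MeasurableSpace (X i)]
  {μ ν : (i : ι) → Measure (X i)} [∀ i, IsProbabilityMeasure (μ i)]
  [∀ i, IsProbabilityMeasure (ν i)] {φ : ∀ i, X i → ℝ≥0∞}

instance Finset.isProbabilityMeasure_piecewise (s : Finset ι) [∀ i, Decidable (i ∈ s)] (i : ι) :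
    IsProbabilityMeasure (s.piecewise ν μ i) := by
  by_cases h : i ∈ s
  · rw [s.piecewise_eq_of_mem _ _ h]; infer_instance
  · rw [s.piecewise_eq_of_notMem _ _ h]; infer_instance

theorem lintegral_prod_infinitePi (s : Finset ι) {g : ∀ i, X i → ℝ≥0∞}
    (hg : ∀ i, Measurable (g i)) :
    ∫⁻ ω, ∏ i ∈ s, g i (ω i) ∂infinitePi μ = ∏ i ∈ s, ∫⁻ x, g i x ∂μ i := by
  rw [lintegral_prod_eq_prod_lintegral_of_indepFun s _ (iIndepFun_infinitePi hg)
    fun i => (hg i).comp (measurable_pi_apply i)]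
  refine prod_congr rfl fun i _ => ?_
  rw [← lintegral_map (hg i) (measurable_pi_apply i), infinitePi_map_eval]

theorem lintegral_prod_mul_prod_infinitePi [DecidableEq ι] (hφ : ∀ i, Measurable (φ i))
    (hφ1 : ∀ i, ∫⁻ x, φ i x ^ 2 ∂μ i = 1) {s t : Finset ι} (hst : s ⊆ t) :
    ∫⁻ ω, (∏ i ∈ t, φ i (ω i)) * ∏ i ∈ s, φ i (ω i) ∂infinitePi μ =
      ∏ i ∈ t \ s, ∫⁻ x, φ i x ∂μ i := by
  have hprod (ω : ∀ i, X i) : (∏ i ∈ t, φ i (ω i)) * ∏ i ∈ s, φ i (ω i) =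
      ∏ i ∈ t, if i ∈ s then φ i (ω i) ^ 2 else φ i (ω i) := by
    rw [prod_ite, filter_mem_eq_inter, inter_eq_right.2 hst, filter_notMem_eq_sdiff,
      ← prod_sdiff hst]
    simp only [sq, prod_mul_distrib]
    ring
  have hint (i : ι) : ∫⁻ x, (if i ∈ s then φ i x ^ 2 else φ i x) ∂μ i =
      if i ∈ s then 1 else ∫⁻ x, φ i x ∂μ i := by
    split_ifs <;> simp [hφ1]
  simp_rw [hprod]
  rw [lintegral_prod_infinitePi t (g := fun i x => if i ∈ s then φ i x ^ 2 else φ i x)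
    fun i => by split_ifs <;> fun_prop]
  simp_rw [hint]
  rw [prod_ite, prod_const_one, one_mul, filter_notMem_eq_sdiff]

theorem withDensity_prod_sq_infinitePi [DecidableEq ι] (hφ : ∀ i, Measurable (φ i))
    (hν : ∀ i, (μ i).withDensity (fun x => φ i x ^ 2) = ν i) (s : Finset ι) :
    (infinitePi μ).withDensity (fun ω => (∏ i ∈ s, φ i (ω i)) ^ 2) =
      infinitePi (s.piecewise ν μ) := by
  refine eq_infinitePi _ fun t A hA => ?_
  set g : ∀ i, X i → ℝ≥0∞ := fun i x =>
    (if i ∈ t then (A i).indicator 1 x else 1) * if i ∈ s then φ i x ^ 2 else 1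
  have hg (i : ι) : Measurable (g i) := by
    refine Measurable.mul ?_ ?_ <;> split_ifs
    exacts [measurable_one.indicator (hA i), measurable_const, (hφ i).pow_const 2,
      measurable_const]
  have hprod (ω : ∀ i, X i) : (Set.pi t A).indicator (fun ω => (∏ i ∈ s, φ i (ω i)) ^ 2) ω =
      ∏ i ∈ t ∪ s, g i (ω i) := by
    rw [prod_mul_distrib, prod_ite_mem, prod_ite_mem, union_inter_cancel_left,
      union_inter_cancel_right, ← Set.indicator_pi_one_apply, prod_pow]
    by_cases hω : ω ∈ Set.pi t A <;> simp [hω]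
  have hint (i : ι) : ∫⁻ x, g i x ∂μ i = if i ∈ t then s.piecewise ν μ i (A i) else 1 := by
    by_cases hit : i ∈ t <;> by_cases his : i ∈ s <;>
      simp only [g, hit, his, if_true, if_false, mul_one, one_mul, Finset.piecewise,
        lintegral_eq_one_of_withDensity_eq (hν i), lintegral_const, measure_univ,
        lintegral_indicator_one (hA i)]
    rw [← hν, withDensity_apply _ (hA i), ← lintegral_indicator (hA i)]
    congr with x
    by_cases hx : x ∈ A i <;> simp [hx]
  rw [withDensity_apply _ (MeasurableSet.pi t.countable_toSet fun i _ => hA i),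
    ← lintegral_indicator (MeasurableSet.pi t.countable_toSet fun i _ => hA i)]
  simp_rw [hprod]
  rw [lintegral_prod_infinitePi _ hg]
  simp_rw [hint]
  rw [prod_ite_mem, union_inter_cancel_left]

theorem infinitePi_cylinder_congr {μ' : (i : ι) → Measure (X i)}
    [∀ i, IsProbabilityMeasure (μ' i)] {s : Finset ι} (h : ∀ i ∈ s, μ i = μ' i)
    {S : Set (Π i : s, X i)} (hS : MeasurableSet S) :
    infinitePi μ (cylinder s S) = infinitePi μ' (cylinder s S) := by
  rw [infinitePi_cylinder μ hS, infinitePi_cylinder μ' hS,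
    show (fun i : s => μ i) = fun i : s => μ' i from funext fun i => h i i.2]

theorem infinitePi_cylinder_le_withDensity_add [DecidableEq ι] (hφ : ∀ i, Measurable (φ i))
    (hν : ∀ i, (μ i).withDensity (fun x => φ i x ^ 2) = ν i) {s t u : Finset ι} (hsu : s ⊆ u)
    {S : Set (Π i : s, X i)} (hS : MeasurableSet S) :
    infinitePi ν (cylinder s S) ≤
      (infinitePi μ).withDensity (fun ω => (∏ i ∈ t, φ i (ω i)) ^ 2) (cylinder s S) +
        ∫⁻ ω, (∏ i ∈ u, φ i (ω i)) ^ 2 - (∏ i ∈ t, φ i (ω i)) ^ 2 ∂infinitePi μ := by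
  rw [infinitePi_cylinder_congr (μ' := u.piecewise ν μ)
      (fun i hi => (u.piecewise_eq_of_mem _ _ (hsu hi)).symm) hS,
    ← withDensity_prod_sq_infinitePi hφ hν u]
  exact withDensity_apply_le_add_lintegral_tsub (by fun_prop) _

theorem infinitePi_setOf_prod_lt_one_le [DecidableEq ι] (hφ : ∀ i, Measurable (φ i))
    (hν : ∀ i, (μ i).withDensity (fun x => φ i x ^ 2) = ν i) (s : Finset ι) :
    infinitePi ν {ω | ∏ i ∈ s, φ i (ω i) < 1} ≤ ∫⁻ ω, ∏ i ∈ s, φ i (ω i) ∂infinitePi μ := by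
  set U : (∀ i, X i) → ℝ≥0∞ := fun ω => ∏ i ∈ s, φ i (ω i)
  have hcyl : {ω | U ω < 1} = cylinder s {x : (i : s) → X i | ∏ i : s, φ i (x i) < 1} := by
    ext ω; simp [U, cylinder, prod_attach _ fun i => φ i (ω i)]
  calc infinitePi ν {ω | U ω < 1}
      ≤ (infinitePi μ).withDensity (fun ω => U ω ^ 2) {ω | U ω < 1} +
          ∫⁻ ω, U ω ^ 2 - U ω ^ 2 ∂infinitePi μ := by
        rw [hcyl]
        exact infinitePi_cylinder_le_withDensity_add hφ hν subset_rfl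
          (measurableSet_lt (by fun_prop) measurable_const)
    _ = ∫⁻ ω in {ω | U ω < 1}, U ω ^ 2 ∂infinitePi μ := by simp [withDensity_apply']
    _ ≤ ∫⁻ ω in {ω | U ω < 1}, U ω ∂infinitePi μ :=
        setLIntegral_mono (by fun_prop) fun ω hω => pow_le_of_le_one zero_le hω.le two_ne_zero
    _ ≤ ∫⁻ ω, U ω ∂infinitePi μ := setLIntegral_le_lintegral _ _

theorem sq_lintegral_sq_prod_tsub_sq_prod_le [DecidableEq ι] (hφ : ∀ i, Measurable (φ i))
    (hφ1 : ∀ i, ∫⁻ x, φ i x ^ 2 ∂μ i = 1) {s t : Finset ι} (hst : s ⊆ t) :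
    (∫⁻ ω, (∏ i ∈ t, φ i (ω i)) ^ 2 - (∏ i ∈ s, φ i (ω i)) ^ 2 ∂infinitePi μ) ^ 2 ≤
      8 * (1 - ∏ i ∈ t \ s, ∫⁻ x, φ i x ∂μ i) := by
  have hU (r : Finset ι) : ∫⁻ ω, (∏ i ∈ r, φ i (ω i)) ^ 2 ∂infinitePi μ = 1 := by
    simpa [sq] using lintegral_prod_mul_prod_infinitePi hφ hφ1 (subset_refl r)
  rw [← lintegral_prod_mul_prod_infinitePi hφ hφ1 hst]
  exact sq_lintegral_sq_tsub_sq_le (by fun_prop) (by fun_prop) (hU t) (hU s)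

end InfinitePi

section Kakutani

variable {Ω : ℕ → Type*} [∀ k, MeasurableSpace (Ω k)]
  {μ ν : (k : ℕ) → Measure (Ω k)} [∀ k, IsProbabilityMeasure (μ k)]
  [∀ k, IsProbabilityMeasure (ν k)] {φ : ∀ k, Ω k → ℝ≥0∞}

theorem iInf_prod_lintegral_pos_of_absolutelyContinuous (hφ : ∀ k, Measurable (φ k))
    (hν : ∀ k, (μ k).withDensity (fun x => φ k x ^ 2) = ν k)
    (hac : infinitePi ν ≪ infinitePi μ) : 0 < ⨅ n, ∏ k ∈ range n, ∫⁻ x, φ k x ∂μ k := by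
  set U : ℕ → (∀ k, Ω k) → ℝ≥0∞ := fun n ω => ∏ k ∈ range n, φ k (ω k)
  have hU (n : ℕ) : Measurable (U n) := by fun_prop
  refine pos_iff_ne_zero.2 fun hzero => ?_
  have hp : Tendsto (fun n => ∫⁻ ω, U n ω ∂infinitePi μ) atTop (𝓝 0) := by
    simpa only [U, lintegral_prod_infinitePi _ hφ, hzero] using
      tendsto_atTop_iInf (ENNReal.antitone_prod_range
        fun k => lintegral_le_one_of_withDensity_sq_eq (hφ k).aemeasurable (hν k))
  set D : ℕ → Set (∀ k, Ω k) := fun n => {ω | 1 ≤ U n ω}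
  have hPD (n : ℕ) : infinitePi μ (D n) ≤ ∫⁻ ω, U n ω ∂infinitePi μ := by
    simpa using mul_meas_ge_le_lintegral₀ (hU n).aemeasurable 1
  have hQD (n : ℕ) : 1 ≤ infinitePi ν (D n) + ∫⁻ ω, U n ω ∂infinitePi μ :=
    calc 1 = infinitePi ν (D n) + infinitePi ν (D n)ᶜ :=
          (prob_add_prob_compl (measurableSet_le measurable_const (hU n))).symm
      _ ≤ _ := by
          gcongr
          simpa [D, U, Set.compl_ofPred] using infinitePi_setOf_prod_lt_one_le hφ hν (range n)
  have hQ0 : Tendsto (fun n => infinitePi ν (D n)) atTop (𝓝 0) :=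
    hac.tendsto_measure_nhds_zero
      (tendsto_of_tendsto_of_tendsto_of_le_of_le tendsto_const_nhds hp (fun _ => zero_le) hPD)
  exact one_ne_zero (nonpos_iff_eq_zero.1 (ge_of_tendsto' (by simpa using hQ0.add hp) hQD))

theorem absolutelyContinuous_of_iInf_prod_lintegral_pos (hφ : ∀ k, Measurable (φ k))
    (hν : ∀ k, (μ k).withDensity (fun x => φ k x ^ 2) = ν k)
    (hpos : 0 < ⨅ n, ∏ k ∈ range n, ∫⁻ x, φ k x ∂μ k) : infinitePi ν ≪ infinitePi μ := by
  refine AbsolutelyContinuous.mk fun A hA hPA =>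
    le_antisymm (ENNReal.le_of_forall_pos_le_add fun ε hε _ => ?_) zero_le
  obtain ⟨n, hn⟩ := ENNReal.exists_one_tsub_prod_range_sdiff_le
    (fun k => lintegral_le_one_of_withDensity_sq_eq (hφ k).aemeasurable (hν k)) hpos
    (η := (ε : ℝ≥0∞) ^ 2 / 8) (by simpa using hε.ne')
  set R := (infinitePi μ).withDensity (fun ω => (∏ k ∈ range n, φ k (ω k)) ^ 2)
  have : IsProbabilityMeasure R := by
    simp only [R, withDensity_prod_sq_infinitePi hφ hν]; infer_instance
  have hcyl : ∀ C ∈ measurableCylinders Ω, infinitePi ν C ≤ R C + ε := by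
    intro C hC
    obtain ⟨s, S, hS, rfl⟩ := (mem_measurableCylinders C).1 hC
    obtain ⟨m, hm⟩ := s.exists_nat_subset_range
    refine (infinitePi_cylinder_le_withDensity_add hφ hν
      (hm.trans (range_mono (le_max_left m n))) hS).trans (add_le_add_right ?_ _)
    rw [← ENNReal.pow_le_pow_left_iff two_ne_zero]
    calc _ ≤ 8 * (1 - ∏ k ∈ range (max m n) \ range n, ∫⁻ x, φ k x ∂μ k) :=
          sq_lintegral_sq_prod_tsub_sq_prod_le hφ
            (fun k => lintegral_eq_one_of_withDensity_eq (hν k)) (range_mono (le_max_right m n))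
      _ ≤ 8 * ((ε : ℝ≥0∞) ^ 2 / 8) := by gcongr; exact hn _ (le_max_right m n)
      _ = (ε : ℝ≥0∞) ^ 2 := ENNReal.mul_div_cancel (by norm_num) (by norm_num)
  calc infinitePi ν A ≤ R A + ε :=
        measure_le_add_of_isSetRing isSetRing_measurableCylinders
          (univ_mem_measurableCylinders Ω) generateFrom_measurableCylinders.symm hcyl hA
    _ = 0 + ε := by rw [withDensity_absolutelyContinuous _ _ hPA]

theorem infinitePi_absolutelyContinuous_iff (hφ : ∀ k, Measurable (φ k))
    (hν : ∀ k, (μ k).withDensity (fun x => φ k x ^ 2) = ν k) :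
    infinitePi ν ≪ infinitePi μ ↔ 0 < ⨅ n, ∏ k ∈ range n, ∫⁻ x, φ k x ∂μ k :=
  ⟨iInf_prod_lintegral_pos_of_absolutelyContinuous hφ hν,
    absolutelyContinuous_of_iInf_prod_lintegral_pos hφ hν⟩

theorem IsProductMeasure.eq_infinitePi {P : Measure ((k : ℕ) → Ω k)}
    (hP : IsProductMeasure μ P) : P = infinitePi μ :=
  Measure.eq_infinitePi μ fun s t ht => hP s t fun k _ => ht k

end Kakutani

/-- Kakutani's criterion: if `ν k ≪ μ k` for every `k`, then the infinite product
measure `Q = ⊗ ν k` is absolutely continuous with respect to `P = ⊗ μ k` if and only if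
the infinite product of the Hellinger integrals `ρ(μ k, ν k) = ∫ √(dν k/dμ k) dμ k`
is strictly positive.  Since each Hellinger integral lies in `[0,1]`, the infinite
product is the infimum of the partial products. -/
theorem productMeasure_absolutelyContinuous_iff_hellinger
    {Ω : ℕ → Type*} [∀ k, MeasurableSpace (Ω k)]
    (μ ν : (k : ℕ) → Measure (Ω k))
    [∀ k, IsProbabilityMeasure (μ k)] [∀ k, IsProbabilityMeasure (ν k)]
    (hac : ∀ k, ν k ≪ μ k)
    (P Q : Measure ((k : ℕ) → Ω k))
    (hP : IsProductMeasure μ P) (hQ : IsProductMeasure ν Q) :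
    Q ≪ P ↔
      0 < ⨅ n : ℕ, ∏ k ∈ Finset.range n,
        ∫ x, Real.sqrt (((ν k).rnDeriv (μ k) x).toReal) ∂(μ k) := by
  obtain rfl := hP.eq_infinitePi
  obtain rfl := hQ.eq_infinitePi
  set φ : ∀ k, Ω k → ℝ≥0∞ := fun k x => ENNReal.ofReal √((ν k).rnDeriv (μ k) x).toReal
  have hφ (k : ℕ) : Measurable (φ k) :=
    (Measure.measurable_rnDeriv _ _).ennreal_toReal.sqrt.ennreal_ofReal
  have hν (k : ℕ) : (μ k).withDensity (fun x => φ k x ^ 2) = ν k :=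
    withDensity_sq_sqrt_rnDeriv (hac k)
  have hρ (k : ℕ) : ∫ x, √((ν k).rnDeriv (μ k) x).toReal ∂μ k = (∫⁻ x, φ k x ∂μ k).toReal :=
    integral_eq_lintegral_of_nonneg_ae (.of_forall fun _ => Real.sqrt_nonneg _)
      (Measure.measurable_rnDeriv _ _).ennreal_toReal.sqrt.aestronglyMeasurable
  have hp (n : ℕ) : ∏ k ∈ range n, ∫⁻ x, φ k x ∂μ k ≤ 1 :=
    prod_le_one' fun k _ => lintegral_le_one_of_withDensity_sq_eq (hφ k).aemeasurable (hν k)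
  simp_rw [hρ, ← ENNReal.toReal_prod]
  rw [← ENNReal.toReal_iInf fun n => ne_top_of_le_ne_top ENNReal.one_ne_top (hp n),
    ENNReal.toReal_pos_iff, infinitePi_absolutelyContinuous_iff hφ hν]
  exact (and_iff_left ((iInf_le _ 0).trans_lt ((hp 0).trans_lt ENNReal.one_lt_top))).symm
end

section
/- Suppose the sequence (a_k) is monotonically nonincreasing (a_k ≥ a_{k+1} for all k), and let n be such that a_n > r_n. Then the open interval (r_n, a_n) contains no point of the set S of all subsums: every subsum x = Σ_k γ_k a_k with γ ∈ {0,1}^ℕ satisfies either x ≤ r_n (if γ_k = 0 for all k ≤ n) or x ≥ a_n (if γ_k = 1 for some k ≤ n). -/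
section Subsum

variable {a : ℕ → ℝ} (ha : ∀ k, 0 ≤ a k) (hs : Summable a) (γ : ℕ → Bool)

include ha hs in
theorem summable_ite_of_nonneg : Summable fun k => if γ k then a k else 0 :=
  hs.of_nonneg_of_le (fun k => by split <;> simp [ha k]) (fun k => by split <;> simp [ha k])

include ha hs in
theorem tsum_ite_le_tsum_nat_add {m : ℕ} (hγ : ∀ k < m, γ k = false) :
    (∑' k, if γ k then a k else 0) ≤ ∑' i, a (m + i) := by
  have head_zero : ∑ k ∈ Finset.range m, (if γ k then a k else 0) = 0 :=
    Finset.sum_eq_zero fun k hk => by simp [hγ k (Finset.mem_range.mp hk)]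
  rw [← (summable_ite_of_nonneg ha hs γ).sum_add_tsum_nat_add m, head_zero, zero_add]
  simp only [add_comm m]
  exact Summable.tsum_le_tsum (fun i => by split <;> simp [ha])
    ((summable_nat_add_iff m).mpr (summable_ite_of_nonneg ha hs γ))
    ((summable_nat_add_iff m).mpr hs)

include ha hs in
theorem le_tsum_ite_of_true {k : ℕ} (hγ : γ k = true) :
    a k ≤ ∑' j, if γ j then a j else 0 := by
  simpa [hγ] using (summable_ite_of_nonneg ha hs γ).le_tsum k
    fun j _ => by split <;> simp [ha j]

end Subsum

theorem subsum_not_mem_gap_general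
    (a : ℕ → ℝ) (ha : ∀ k, 0 < a k) (hsum : ∑' k, a k = 1)
    (hmono : ∀ k, a (k + 1) ≤ a k)
    (r : ℕ → ℝ) (hr : ∀ k, r k = ∑' i : ℕ, a (k + 1 + i))
    (n : ℕ) :
    ∀ γ : ℕ → Bool,
      ((∀ k ≤ n, γ k = false) → (∑' k : ℕ, if γ k then a k else 0) ≤ r n) ∧
      ((∃ k ≤ n, γ k = true) → a n ≤ ∑' k : ℕ, if γ k then a k else 0) ∧
      (∑' k : ℕ, if γ k then a k else 0) ∉ Set.Ioo (r n) (a n) := by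
  intro γ
  have hs : Summable a := by
    by_contra h
    simp [tsum_eq_zero_of_not_summable h] at hsum
  have ha' : ∀ k, 0 ≤ a k := fun k => (ha k).le
  have below : (∀ k ≤ n, γ k = false) → (∑' k, if γ k then a k else 0) ≤ r n := fun h =>
    hr n ▸ tsum_ite_le_tsum_nat_add ha' hs γ fun k hk => h k (Nat.lt_succ_iff.mp hk)
  have above : (∃ k ≤ n, γ k = true) → a n ≤ ∑' k, if γ k then a k else 0 :=
    fun ⟨k, hk, hγ⟩ => (antitone_nat_of_succ_le hmono hk).trans (le_tsum_ite_of_true ha' hs γ hγ)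
  refine ⟨below, above, fun ⟨hlo, hhi⟩ => ?_⟩
  by_cases h : ∃ k ≤ n, γ k = true
  · exact (above h).not_gt hhi
  · simp only [not_exists, not_and, Bool.not_eq_true] at h
    exact (below h).not_gt hlo

/-- Let the positive terms `a k` of the series `∑ a k = 1` be nonincreasing, let
`r k = ∑_{i > k} a i` be the tails, and suppose `a n > r n`.  Then every subsum
`x = ∑ γ k * a k` with `γ : ℕ → Bool` satisfies `x ≤ r n` if `γ k = false` for all
`k ≤ n`, and `x ≥ a n` if `γ k = true` for some `k ≤ n`; in particular the open
interval `(r n, a n)` contains no subsum of the series. -/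
theorem subsum_not_mem_gap
    (a : ℕ → ℝ) (ha : ∀ k, 0 < a k) (hsum : ∑' k, a k = 1)
    (hmono : ∀ k, a (k + 1) ≤ a k)
    (r : ℕ → ℝ) (hr : ∀ k, r k = ∑' i : ℕ, a (k + 1 + i))
    (n : ℕ) (hn : r n < a n) :
    ∀ γ : ℕ → Bool,
      ((∀ k ≤ n, γ k = false) → (∑' k : ℕ, if γ k then a k else 0) ≤ r n) ∧
      ((∃ k ≤ n, γ k = true) → a n ≤ ∑' k : ℕ, if γ k then a k else 0) ∧
      (∑' k : ℕ, if γ k then a k else 0) ∉ Set.Ioo (r n) (a n) :=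
  subsum_not_mem_gap_general a ha hsum hmono r hr n
end

section
/- Let ε ∈ (0,1) and a_k = (1−ε)/2^k + 3ε/4^k for k ≥ 1. Then the set S of all subsums of the series Σ_k a_k is a nowhere dense subset of ℝ of positive Lebesgue measure. -/
/-!
Write `rₙ = ∑_{k ≥ n} aₖ`, so that `rₙ = aₙ + rₙ₊₁`; here `aₙ - rₙ₊₁ = ε / (2 · 4ⁿ) > 0`.
A subsum whose first `n` digits have partial sum `c` lies in `[c, c + rₙ]` but never in the gap
`(c + rₙ₊₁, c + aₙ)` (induct on `n`, splitting off the first term). As `rₙ → 0`, every point of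
`S` is a limit of points outside `S`, and `S` is closed as a continuous image of the Cantor space,
so it is nowhere dense. Conversely, the greedy expansion writes every `x ∈ [0, r₀] = [0, 1]` lying
in none of these gaps as a subsum. There are at most `2ⁿ` gaps of level `n`, of total length
at most `∑ 2ⁿ ε / (2 · 4ⁿ) = ε < 1`, so `volume S ≥ 1 - ε`.
-/

open MeasureTheory Set Filter Topology

noncomputable def subsum (a : ℕ → ℝ) (γ : ℕ → Bool) : ℝ :=
  ∑' k, if γ k then a k else 0

noncomputable def partialSubsum (a : ℕ → ℝ) (γ : ℕ → Bool) (n : ℕ) : ℝ :=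
  ∑ k ∈ Finset.range n, if γ k then a k else 0

noncomputable def tailSum (a : ℕ → ℝ) (n : ℕ) : ℝ :=
  ∑' k, a (k + n)

section Subsums

variable {a : ℕ → ℝ}

lemma partialSubsum_succ (γ : ℕ → Bool) (n : ℕ) :
    partialSubsum a γ (n + 1) = partialSubsum a γ n + if γ n then a n else 0 :=
  Finset.sum_range_succ _ n

lemma partialSubsum_succ' (γ : ℕ → Bool) (n : ℕ) :
    partialSubsum a γ (n + 1) =
      (if γ 0 then a 0 else 0) + partialSubsum (fun k => a (k + 1)) (fun k => γ (k + 1)) n := by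
  rw [partialSubsum, Finset.sum_range_succ', add_comm]
  rfl

lemma tailSum_shift (n : ℕ) : tailSum (fun k => a (k + 1)) n = tailSum a (n + 1) := rfl

lemma tailSum_eq_add (hs : Summable a) (n : ℕ) : tailSum a n = a n + tailSum a (n + 1) := by
  rw [tailSum, ((summable_nat_add_iff n).2 hs).tsum_eq_zero_add, zero_add, tailSum]
  simp only [add_right_comm _ 1 n, add_assoc]

lemma ite_nonneg_le (ha : ∀ k, 0 ≤ a k) (γ : ℕ → Bool) (k : ℕ) :
    0 ≤ (if γ k then a k else 0) ∧ (if γ k then a k else 0) ≤ a k := by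
  cases γ k <;> simp [ha k]

lemma summable_ite (ha : ∀ k, 0 ≤ a k) (hs : Summable a) (γ : ℕ → Bool) :
    Summable fun k => if γ k then a k else 0 :=
  hs.of_nonneg_of_le (fun k => (ite_nonneg_le ha γ k).1) (fun k => (ite_nonneg_le ha γ k).2)

lemma tailSum_nonneg (ha : ∀ k, 0 ≤ a k) (n : ℕ) : 0 ≤ tailSum a n :=
  tsum_nonneg fun k => ha (k + n)

lemma subsum_nonneg (ha : ∀ k, 0 ≤ a k) (γ : ℕ → Bool) : 0 ≤ subsum a γ :=
  tsum_nonneg fun k => (ite_nonneg_le ha γ k).1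

lemma partialSubsum_nonneg (ha : ∀ k, 0 ≤ a k) (γ : ℕ → Bool) (n : ℕ) :
    0 ≤ partialSubsum a γ n :=
  Finset.sum_nonneg fun k _ => (ite_nonneg_le ha γ k).1

lemma partialSubsum_le_subsum (ha : ∀ k, 0 ≤ a k) (hs : Summable a) (γ : ℕ → Bool) (n : ℕ) :
    partialSubsum a γ n ≤ subsum a γ :=
  (summable_ite ha hs γ).sum_le_tsum _ fun k _ => (ite_nonneg_le ha γ k).1

lemma subsum_le_partialSubsum_add_tailSum (ha : ∀ k, 0 ≤ a k) (hs : Summable a)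
    (γ : ℕ → Bool) (n : ℕ) : subsum a γ ≤ partialSubsum a γ n + tailSum a n := by
  rw [subsum, ← (summable_ite ha hs γ).sum_add_tsum_nat_add n]
  exact add_le_add_right (((summable_nat_add_iff n).2 (summable_ite ha hs γ)).tsum_le_tsum
    (fun k => (ite_nonneg_le ha γ (k + n)).2) ((summable_nat_add_iff n).2 hs)) _

lemma subsum_le_tailSum_zero (ha : ∀ k, 0 ≤ a k) (hs : Summable a) (γ : ℕ → Bool) :
    subsum a γ ≤ tailSum a 0 := by
  simpa [partialSubsum] using subsum_le_partialSubsum_add_tailSum ha hs γ 0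

lemma partialSubsum_add_le_tailSum_zero (ha : ∀ k, 0 ≤ a k) (hs : Summable a)
    (γ : ℕ → Bool) (n : ℕ) : partialSubsum a γ n + a n ≤ tailSum a 0 := by
  have hp : partialSubsum a γ n ≤ ∑ k ∈ Finset.range n, a k :=
    Finset.sum_le_sum fun k _ => (ite_nonneg_le ha γ k).2
  have hsplit := hs.sum_add_tsum_nat_add n
  have htail := tailSum_eq_add hs n
  have hnonneg := tailSum_nonneg ha (n + 1)
  simp only [tailSum, add_zero] at hsplit htail hnonneg ⊢
  linarith

lemma subsum_eq_ite_add (ha : ∀ k, 0 ≤ a k) (hs : Summable a) (γ : ℕ → Bool) :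
    subsum a γ = (if γ 0 then a 0 else 0) + subsum (fun k => a (k + 1)) (fun k => γ (k + 1)) :=
  (summable_ite ha hs γ).tsum_eq_zero_add

lemma subsum_shift_mem_Icc (ha : ∀ k, 0 ≤ a k) (hs : Summable a) (γ : ℕ → Bool) :
    subsum (fun k => a (k + 1)) (fun k => γ (k + 1)) ∈ Icc 0 (tailSum a 1) :=
  ⟨subsum_nonneg (fun k => ha (k + 1)) _,
    subsum_le_tailSum_zero (fun k => ha (k + 1)) ((summable_nat_add_iff 1).2 hs) _⟩

lemma subsum_notMem_Ioo (ha : ∀ k, 0 ≤ a k) (hs : Summable a)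
    (hgap : ∀ m, tailSum a (m + 1) < a m) (γ δ : ℕ → Bool) (n : ℕ) :
    subsum a δ ∉ Ioo (partialSubsum a γ n + tailSum a (n + 1)) (partialSubsum a γ n + a n) := by
  induction n generalizing a γ δ with
  | zero =>
    obtain ⟨hδ₀, hδ₁⟩ := subsum_shift_mem_Icc ha hs δ
    have hgap₀ := hgap 0
    rw [subsum_eq_ite_add ha hs]
    cases δ 0 <;> simp only [partialSubsum, Finset.range_zero, Finset.sum_empty, zero_add] <;> grind
  | succ n ih =>
    have ha' : ∀ k, 0 ≤ a (k + 1) := fun k => ha (k + 1)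
    have hs' : Summable fun k => a (k + 1) := (summable_nat_add_iff 1).2 hs
    have key := ih ha' hs' (fun m => hgap (m + 1)) (fun k => γ (k + 1)) (fun k => δ (k + 1))
    obtain ⟨hδ₀, hδ₁⟩ := subsum_shift_mem_Icc ha hs δ
    have hγ₀ := partialSubsum_nonneg ha' (fun k => γ (k + 1)) n
    have hγ₁ := partialSubsum_add_le_tailSum_zero ha' hs' (fun k => γ (k + 1)) n
    have hgap₀ := hgap 0
    have htail := tailSum_nonneg ha (n + 2)
    rw [tailSum_shift] at key hγ₁
    rw [subsum_eq_ite_add ha hs, partialSubsum_succ']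
    cases δ 0 <;> cases γ 0 <;> simp only [Bool.false_eq_true, if_true, if_false] <;> grind

lemma continuous_subsum (ha : ∀ k, 0 ≤ a k) (hs : Summable a) : Continuous (subsum a) := by
  refine continuous_tsum (fun k => ?_) hs fun k γ => ?_
  · exact (continuous_of_discreteTopology (f := fun b : Bool => if b then a k else 0)).comp
      (continuous_apply k)
  · rw [Real.norm_of_nonneg (ite_nonneg_le ha γ k).1]
    exact (ite_nonneg_le ha γ k).2

lemma isClosed_range_subsum (ha : ∀ k, 0 ≤ a k) (hs : Summable a) :
    IsClosed (range (subsum a)) :=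
  (isCompact_range (continuous_subsum ha hs)).isClosed

theorem isNowhereDense_range_subsum (ha : ∀ k, 0 ≤ a k) (hs : Summable a)
    (hgap : ∀ m, tailSum a (m + 1) < a m) : IsNowhereDense (range (subsum a)) := by
  rw [(isClosed_range_subsum ha hs).isNowhereDense_iff, eq_empty_iff_forall_notMem]
  intro x hx
  obtain ⟨r, hr, hball⟩ := Metric.mem_nhds_iff.1 (mem_interior_iff_mem_nhds.1 hx)
  obtain ⟨γ, rfl⟩ := interior_subset hx
  obtain ⟨n, hn⟩ := ((tendsto_sum_nat_add a).eventually (gt_mem_nhds hr)).exists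
  have hlo := partialSubsum_le_subsum ha hs γ n
  have hhi := subsum_le_partialSubsum_add_tailSum ha hs γ n
  have hstep := tailSum_eq_add hs n
  have hgapn := hgap n
  have hr' : tailSum a n < r := hn
  -- with `c` the partial sum, `y` is the midpoint of `[c, c + rₙ] ∋ x` and lies in the gap
  set y := partialSubsum a γ n + tailSum a n / 2 with hy
  obtain ⟨δ, hδ⟩ := hball (show y ∈ Metric.ball (subsum a γ) r by
    rw [Metric.mem_ball, Real.dist_eq, abs_sub_lt_iff]
    constructor <;> linarith)
  exact subsum_notMem_Ioo ha hs hgap γ δ n (by rw [hδ]; constructor <;> linarith)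

noncomputable def gapSet (a : ℕ → ℝ) : Set ℝ :=
  ⋃ n, ⋃ s ∈ (Finset.range n).powerset, Ioo (∑ k ∈ s, a k + tailSum a (n + 1)) (∑ k ∈ s, a k + a n)

lemma Ioo_partialSubsum_subset_gapSet (γ : ℕ → Bool) (n : ℕ) :
    Ioo (partialSubsum a γ n + tailSum a (n + 1)) (partialSubsum a γ n + a n) ⊆ gapSet a := by
  rw [partialSubsum, ← Finset.sum_filter]
  exact subset_iUnion_of_subset n
    (subset_iUnion₂_of_subset _ (Finset.mem_powerset.2 (Finset.filter_subset _ _)) subset_rfl)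

lemma volume_gapSet_le :
    volume (gapSet a) ≤ ∑' n, 2 ^ n * ENNReal.ofReal (a n - tailSum a (n + 1)) := by
  refine (measure_iUnion_le _).trans (ENNReal.tsum_le_tsum fun n => ?_)
  refine (measure_biUnion_finset_le _ _).trans_eq ?_
  simp_rw [Real.volume_Ioo, add_sub_add_left_eq_sub, Finset.sum_const, Finset.card_powerset,
    Finset.card_range, nsmul_eq_mul, Nat.cast_pow, Nat.cast_ofNat]

noncomputable def greedySum (a : ℕ → ℝ) (x : ℝ) : ℕ → ℝ
  | 0 => 0
  | n + 1 => if a n ≤ x - greedySum a x n then greedySum a x n + a n else greedySum a x n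

noncomputable def greedyDigits (a : ℕ → ℝ) (x : ℝ) (n : ℕ) : Bool :=
  decide (a n ≤ x - greedySum a x n)

lemma greedySum_eq_partialSubsum (x : ℝ) (n : ℕ) :
    greedySum a x n = partialSubsum a (greedyDigits a x) n := by
  induction n with
  | zero => simp [greedySum, partialSubsum]
  | succ n ih =>
    rw [greedySum, partialSubsum_succ, ← ih]
    by_cases h : a n ≤ x - greedySum a x n <;> simp [greedyDigits, h]

lemma sub_greedySum_mem_Icc (hs : Summable a) {x : ℝ} (hx : x ∈ Icc 0 (tailSum a 0))
    (hxG : x ∉ gapSet a) (n : ℕ) : x - greedySum a x n ∈ Icc 0 (tailSum a n) := by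
  induction n with
  | zero => simpa [greedySum] using hx
  | succ n ih =>
    have hstep := tailSum_eq_add hs n
    have hnot : x ∉ Ioo (greedySum a x n + tailSum a (n + 1)) (greedySum a x n + a n) := by
      rw [greedySum_eq_partialSubsum]
      exact fun h => hxG (Ioo_partialSubsum_subset_gapSet _ n h)
    rw [Set.mem_Ioo, not_and_or, not_lt, not_lt] at hnot
    rw [greedySum]
    split_ifs with h
    · constructor <;> linarith [ih.2]
    · constructor <;> rcases hnot with hnot | hnot <;> linarith [ih.1]

lemma mem_range_subsum_of_notMem_gapSet (ha : ∀ k, 0 ≤ a k) (hs : Summable a) {x : ℝ}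
    (hx : x ∈ Icc 0 (tailSum a 0)) (hxG : x ∉ gapSet a) : x ∈ range (subsum a) := by
  have hbound := sub_greedySum_mem_Icc hs hx hxG
  have hlim : Tendsto (fun n => x - greedySum a x n) atTop (𝓝 0) :=
    squeeze_zero (fun n => (hbound n).1) (fun n => (hbound n).2) (tendsto_sum_nat_add a)
  refine ⟨greedyDigits a x, tendsto_nhds_unique
    (summable_ite ha hs (greedyDigits a x)).hasSum.tendsto_sum_nat ?_⟩
  simpa [greedySum_eq_partialSubsum, partialSubsum] using (tendsto_const_nhds (x := x)).sub hlim

theorem volume_Icc_le_volume_range_subsum_add (ha : ∀ k, 0 ≤ a k) (hs : Summable a) :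
    volume (Icc 0 (tailSum a 0)) ≤
      volume (range (subsum a)) + ∑' n, 2 ^ n * ENNReal.ofReal (a n - tailSum a (n + 1)) := by
  have hcover : Icc 0 (tailSum a 0) ⊆ range (subsum a) ∪ gapSet a := fun x hx =>
    (em (x ∈ gapSet a)).elim Or.inr fun hxG =>
      Or.inl (mem_range_subsum_of_notMem_gapSet ha hs hx hxG)
  calc volume (Icc 0 (tailSum a 0))
      ≤ volume (range (subsum a)) + volume (gapSet a) :=
        (measure_mono hcover).trans (measure_union_le _ _)
    _ ≤ _ := add_le_add_right volume_gapSet_le _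

end Subsums

noncomputable def fatCantorSeq (ε : ℝ) (k : ℕ) : ℝ :=
  (1 - ε) / 2 ^ (k + 1) + 3 * ε / 4 ^ (k + 1)

section FatCantorSeq

variable {ε : ℝ}

lemma hasSum_fatCantorSeq_nat_add (ε : ℝ) (n : ℕ) :
    HasSum (fun k => fatCantorSeq ε (k + n)) ((1 - ε) / 2 ^ n + ε / 4 ^ n) := by
  have h2 := (hasSum_geometric_of_lt_one (r := 1 / 2) (by norm_num) (by norm_num)).mul_left
    ((1 - ε) / 2 ^ (n + 1))
  have h4 := (hasSum_geometric_of_lt_one (r := 1 / 4) (by norm_num) (by norm_num)).mul_left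
    (3 * ε / 4 ^ (n + 1))
  have hsum : (1 - ε) / 2 ^ (n + 1) * (1 - 1 / 2)⁻¹ + 3 * ε / 4 ^ (n + 1) * (1 - 1 / 4)⁻¹ =
      (1 - ε) / 2 ^ n + ε / 4 ^ n := by
    field_simp
    ring
  refine hsum ▸ (h2.add h4).congr_fun fun k => ?_
  simp only [fatCantorSeq, div_pow, one_pow, pow_add]
  field_simp

lemma summable_fatCantorSeq (ε : ℝ) : Summable (fatCantorSeq ε) :=
  (hasSum_fatCantorSeq_nat_add ε 0).summable

lemma tailSum_fatCantorSeq (ε : ℝ) (n : ℕ) :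
    tailSum (fatCantorSeq ε) n = (1 - ε) / 2 ^ n + ε / 4 ^ n :=
  (hasSum_fatCantorSeq_nat_add ε n).tsum_eq

lemma fatCantorSeq_nonneg (h0 : 0 ≤ ε) (h1 : ε ≤ 1) (k : ℕ) : 0 ≤ fatCantorSeq ε k := by
  unfold fatCantorSeq
  have : 0 ≤ 1 - ε := sub_nonneg.2 h1
  positivity

lemma fatCantorSeq_sub_tailSum_succ (ε : ℝ) (n : ℕ) :
    fatCantorSeq ε n - tailSum (fatCantorSeq ε) (n + 1) = ε / 2 / 4 ^ n := by
  rw [tailSum_fatCantorSeq, fatCantorSeq]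
  field_simp
  ring

lemma tailSum_succ_lt_fatCantorSeq (h0 : 0 < ε) (n : ℕ) :
    tailSum (fatCantorSeq ε) (n + 1) < fatCantorSeq ε n := by
  have : 0 < ε / 2 / 4 ^ n := by positivity
  linarith [fatCantorSeq_sub_tailSum_succ ε n]

lemma tsum_two_pow_mul_gap_fatCantorSeq (h0 : 0 ≤ ε) :
    ∑' n, 2 ^ n * ENNReal.ofReal (fatCantorSeq ε n - tailSum (fatCantorSeq ε) (n + 1)) =
      ENNReal.ofReal ε := by
  have hterm (n : ℕ) :
      2 ^ n * ENNReal.ofReal (ε / 2 / 4 ^ n) = ENNReal.ofReal (ε / 2 / 2 ^ n) := by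
    rw [← ENNReal.ofReal_ofNat 2, ← ENNReal.ofReal_pow (by norm_num),
      ← ENNReal.ofReal_mul (by positivity)]
    congr 1
    rw [show (4 : ℝ) ^ n = 2 ^ n * 2 ^ n by rw [← mul_pow]; norm_num]
    field_simp
  simp_rw [fatCantorSeq_sub_tailSum_succ, hterm]
  rw [← ENNReal.ofReal_tsum_of_nonneg (fun n => by positivity) (hasSum_geometric_two' ε).summable,
    tsum_geometric_two']

end FatCantorSeq

/-- For `ε ∈ (0,1)` and `aₖ = (1-ε)/2ᵏ + 3ε/4ᵏ` (`k ≥ 1`), the set of all subsums of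
the series `∑ aₖ` is a nowhere dense subset of `ℝ` of positive Lebesgue measure. -/
theorem subsums_example_isNowhereDense_pos_volume
    (ε : ℝ) (hε : ε ∈ Set.Ioo (0 : ℝ) 1)
    (a : ℕ → ℝ)
    (haval : ∀ k, a k = (1 - ε) / 2 ^ (k + 1) + 3 * ε / 4 ^ (k + 1))
    (S : Set ℝ)
    (hS : S = {x | ∃ γ : ℕ → Bool, x = ∑' k : ℕ, if γ k then a k else 0}) :
    IsNowhereDense S ∧ 0 < volume S := by
  obtain rfl : a = fatCantorSeq ε := funext haval
  obtain rfl : S = range (subsum (fatCantorSeq ε)) := by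
    rw [hS]
    ext x
    simp only [Set.mem_ofPred_eq, Set.mem_range, subsum, eq_comm]
  obtain ⟨h0, h1⟩ := hε
  have ha := fatCantorSeq_nonneg h0.le h1.le
  have hs := summable_fatCantorSeq ε
  refine ⟨isNowhereDense_range_subsum ha hs (tailSum_succ_lt_fatCantorSeq h0),
    pos_iff_ne_zero.2 fun hzero => ?_⟩
  have hvol := volume_Icc_le_volume_range_subsum_add ha hs
  rw [hzero, zero_add, tsum_two_pow_mul_gap_fatCantorSeq h0.le, tailSum_fatCantorSeq,
    Real.volume_Icc, ENNReal.ofReal_le_ofReal_iff h0.le] at hvol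
  norm_num at hvol
  linarith
end
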